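/- arXiv:2105.14560 — 8 statements merged into one kernel-verified Lean document; each statement's English description precedes it below -/
import Mathlib

section
/- Let S be a finite set with binary relation →. If M ⊆ S satisfies deterrence of external deviations (there is no s ∈ M and t ∉ M with s → t) and iterated external stability (for every t ∉ M there is a finite →-path from t to some element of M), and M is minimal (with respect to inclusion) among nonempty sets with these two properties, then M equals the union of all absorbing sets of (S,→). -/
/-- `A` is an absorbing set of `(S, r)`. -/
def IsAbsorbing {S : Type*} (r : S → S → Prop) (A : Set S) : Prop :=
  A.Nonempty ∧
  (∀ s ∈ A, ∀ t ∈ A, Relation.ReflTransGen r t s) ∧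
  (∀ s ∈ A, ∀ t ∉ A, ¬ Relation.ReflTransGen r s t)

/-- Deterrence of external deviations: no one-step move from inside `M` to outside `M`. -/
def Deterrence {S : Type*} (r : S → S → Prop) (M : Set S) : Prop :=
  ∀ s ∈ M, ∀ t ∉ M, ¬ r s t

/-- Iterated external stability: from every state outside `M` there is a finite
improvement path into `M`. -/
def IterExtStable {S : Type*} (r : S → S → Prop) (M : Set S) : Prop :=
  ∀ t ∉ M, ∃ s ∈ M, Relation.ReflTransGen r t s

/-- The set of states reachable from `x`. -/
def Reach {S : Type*} (r : S → S → Prop) (x : S) : Set S :=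
  {z | Relation.ReflTransGen r x z}

lemma reach_subset {S : Type*} (r : S → S → Prop) {x y : S}
    (h : Relation.ReflTransGen r x y) : Reach r y ⊆ Reach r x :=
  fun _ hz => h.trans hz

/-- From every state there is a path to some absorbing set (of the form `Reach r y`). -/
lemma exists_absorbing_reach {S : Type*} [Fintype S] (r : S → S → Prop) (x : S) :
    ∃ y, Relation.ReflTransGen r x y ∧ IsAbsorbing r (Reach r y) := by
  classical
  set T : Set ℕ := {n | ∃ z, Relation.ReflTransGen r x z ∧ (Reach r z).ncard = n} with hT
  have hTne : T.Nonempty := ⟨(Reach r x).ncard, x, Relation.ReflTransGen.refl, rfl⟩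
  obtain ⟨z, hxz, hcard⟩ : ∃ z, Relation.ReflTransGen r x z ∧ (Reach r z).ncard = sInf T :=
    Nat.sInf_mem hTne
  have hmin : ∀ w, Relation.ReflTransGen r x w → (Reach r z).ncard ≤ (Reach r w).ncard := by
    intro w hw
    rw [hcard]
    exact Nat.sInf_le ⟨w, hw, rfl⟩
  refine ⟨z, hxz, ⟨z, Relation.ReflTransGen.refl⟩, ?_, ?_⟩
  · intro s hs t ht
    -- Reach r t = Reach r z since t reachable from z and cardinalities agree
    have hsub : Reach r t ⊆ Reach r z := reach_subset r ht
    have hle : (Reach r z).ncard ≤ (Reach r t).ncard := hmin t (hxz.trans ht)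
    have heq : Reach r t = Reach r z :=
      Set.eq_of_subset_of_ncard_le hsub hle (Set.toFinite _)
    have : s ∈ Reach r t := heq ▸ hs
    exact this
  · intro s hs t ht hst
    exact ht (hs.trans hst)

/-- A minimal nonempty set satisfying deterrence of external deviations and iterated
external stability equals the union of all absorbing sets. -/
theorem mss_eq_unionAbsorbing {S : Type*} [Fintype S] (r : S → S → Prop) (M : Set S)
    (hne : M.Nonempty) (hdet : Deterrence r M) (hies : IterExtStable r M)
    (hmin : ∀ M' : Set S, M' ⊆ M → M'.Nonempty → Deterrence r M' → IterExtStable r M' →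
      M' = M) :
    M = {x : S | ∃ A : Set S, IsAbsorbing r A ∧ x ∈ A} := by
  classical
  set B : Set S := {x : S | ∃ A : Set S, IsAbsorbing r A ∧ x ∈ A} with hB
  -- M is closed under reachability
  have hclosed : ∀ s ∈ M, ∀ t, Relation.ReflTransGen r s t → t ∈ M := by
    intro s hs t hst
    induction hst with
    | refl => exact hs
    | tail _ hbc ih =>
        by_contra hc
        exact hdet _ ih _ hc hbc
  -- every absorbing set is contained in M
  have hAsub : ∀ A : Set S, IsAbsorbing r A → A ⊆ M := by
    rintro A ⟨⟨a, ha⟩, hmut, hcl⟩ x hx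
    -- find an element of A ∩ M
    have : ∃ m ∈ A, m ∈ M := by
      by_cases haM : a ∈ M
      · exact ⟨a, ha, haM⟩
      · obtain ⟨m, hmM, ham⟩ := hies a haM
        have hmA : m ∈ A := by
          by_contra hmA
          exact hcl a ha m hmA ham
        exact ⟨m, hmA, hmM⟩
    obtain ⟨m, hmA, hmM⟩ := this
    exact hclosed m hmM x (hmut x hx m hmA)
  have hBsub : B ⊆ M := by
    rintro x ⟨A, hA, hxA⟩
    exact hAsub A hA hxA
  have hBne : B.Nonempty := by
    obtain ⟨x, _⟩ := hne
    obtain ⟨y, _, hy⟩ := exists_absorbing_reach r x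
    exact ⟨y, ⟨Reach r y, hy, Relation.ReflTransGen.refl⟩⟩
  have hBdet : Deterrence r B := by
    rintro s ⟨A, hA, hsA⟩ t htB hst
    exact htB ⟨A, hA, by
      by_contra htA
      exact hA.2.2 s hsA t htA (Relation.ReflTransGen.single hst)⟩
  have hBies : IterExtStable r B := by
    intro t _
    obtain ⟨y, hty, hy⟩ := exists_absorbing_reach r t
    exact ⟨y, ⟨Reach r y, hy, Relation.ReflTransGen.refl⟩, hty⟩
  exact (hmin B hBsub hBne hBdet hBies).symm
end

section
/- Let S be a finite set with binary relation →, and let M be the unique minimal nonempty subset of S satisfying deterrence of external deviations and iterated external stability (the myopic stable set). Then every absorbing set A of (S,→) satisfies A ⊆ M. -/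
/-- Every absorbing set is contained in the myopic stable set: the unique minimal
nonempty set satisfying deterrence of external deviations and iterated external
stability. -/
theorem absorbing_subset_mss {S : Type*} [Fintype S] (r : S → S → Prop) (M : Set S)
    (hne : M.Nonempty) (hdet : Deterrence r M) (hies : IterExtStable r M)
    (hmin : ∀ M' : Set S, M' ⊆ M → M'.Nonempty → Deterrence r M' → IterExtStable r M' →
      M' = M)
    (huniq : ∀ M' : Set S, M'.Nonempty → Deterrence r M' → IterExtStable r M' →
      (∀ M'' : Set S, M'' ⊆ M' → M''.Nonempty → Deterrence r M'' → IterExtStable r M'' →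
        M'' = M') → M' = M)
    (A : Set S) (hA : IsAbsorbing r A) : A ⊆ M := by
  obtain ⟨hAne, hmut, habs⟩ := hA
  -- M is closed under refl-trans paths, by deterrence
  have hclosed : ∀ {x y : S}, x ∈ M → Relation.ReflTransGen r x y → y ∈ M := by
    intro x y hx hxy
    induction hxy with
    | refl => exact hx
    | tail _ hbc ih =>
      by_contra hc
      exact hdet _ ih _ hc hbc
  intro a ha
  by_contra haM
  obtain ⟨s, hsM, hpath⟩ := hies a haM
  have hsA : s ∈ A := by
    by_contra hsA
    exact habs a ha s hsA hpath
  -- from s ∈ A we can reach a ∈ A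
  have : Relation.ReflTransGen r s a := hmut a ha s hsA
  exact haM (hclosed hsM this)
end

section
/- Let S be a finite set with binary relation →. A set V ⊆ S is a generalized stable set if (1) no two distinct elements of V are connected by a finite →-path of length ≥ 1, and (2) every t ∈ S \ V has a finite →-path into V. Then the union of all generalized stable sets of (S,→) equals the union of all absorbing sets of (S,→). -/
/-- `V` is a generalized stable set: no two distinct elements of `V` are connected by a
finite path of length at least one, and every state outside `V` has a finite path
into `V`. -/
def IsGenStable {S : Type*} (r : S → S → Prop) (V : Set S) : Prop :=
  (∀ s ∈ V, ∀ t ∈ V, s ≠ t → ¬ Relation.TransGen r s t) ∧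
  (∀ t ∉ V, ∃ s ∈ V, Relation.ReflTransGen r t s)

open Relation

section Aux

variable {S : Type*} [Fintype S] {r : S → S → Prop}

/-- A terminal state: everything it reaches can reach it back. -/
def MyTerminal (r : S → S → Prop) (y : S) : Prop :=
  ∀ z, ReflTransGen r y z → ReflTransGen r z y

lemma exists_terminal (t : S) : ∃ y, ReflTransGen r t y ∧ MyTerminal r y := by
  classical
  let q : S → S → Prop := fun z y => ReflTransGen r y z ∧ ¬ ReflTransGen r z y
  haveI : IsTrans S q := ⟨by
    rintro a b c ⟨hba, hnab⟩ ⟨hcb, hnbc⟩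
    exact ⟨hcb.trans hba, fun h => hnbc (hba.trans h)⟩⟩
  haveI : IsIrrefl S q := ⟨by rintro a ⟨h, hn⟩; exact hn h⟩
  have hwf : WellFounded q := Finite.wellFounded_of_trans_of_irrefl q
  induction t using hwf.induction with
  | _ t ih =>
    by_cases ht : MyTerminal r t
    · exact ⟨t, ReflTransGen.refl, ht⟩
    · simp only [MyTerminal, not_forall] at ht
      obtain ⟨z, hz, hnz⟩ := ht
      obtain ⟨y, hy, hyt⟩ := ih z ⟨hz, hnz⟩
      exact ⟨y, hz.trans hy, hyt⟩

lemma terminal_of_reach {y s : S} (hy : MyTerminal r y) (h : ReflTransGen r y s) :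
    MyTerminal r s := fun z hz => (hy z (h.trans hz)).trans h

lemma transGen_of_reflTransGen_ne {a b : S} (h : ReflTransGen r a b) (hne : a ≠ b) :
    TransGen r a b := by
  rcases (reflTransGen_iff_eq_or_transGen).mp h with h1 | h2
  · exact absurd h1.symm hne
  · exact h2

end Aux

/-- The union of all generalized stable sets equals the union of all absorbing sets. -/
theorem unionGenStable_eq_unionAbsorbing {S : Type*} [Fintype S] (r : S → S → Prop) :
    {x : S | ∃ V : Set S, IsGenStable r V ∧ x ∈ V} =
      {x : S | ∃ A : Set S, IsAbsorbing r A ∧ x ∈ A} := by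
  classical
  ext x
  simp only [Set.mem_setOf_eq]
  constructor
  · -- gen stable → absorbing
    rintro ⟨V, ⟨hV1, hV2⟩, hxV⟩
    obtain ⟨y, hxy, hyT⟩ := exists_terminal (r := r) x
    have hyx : ReflTransGen r y x := by
      by_cases hxeq : x = y
      · subst hxeq; exact ReflTransGen.refl
      by_cases hyV : y ∈ V
      · exact absurd (transGen_of_reflTransGen_ne hxy hxeq) (hV1 x hxV y hyV hxeq)
      · obtain ⟨s, hsV, hys⟩ := hV2 y hyV
        have hsT : MyTerminal r s := terminal_of_reach hyT hys
        have hsy : ReflTransGen r s y := hyT s hys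
        by_cases hsx : s = x
        · exact hsx ▸ hys
        · exact absurd (transGen_of_reflTransGen_ne (hxy.trans hys) (fun h => hsx h.symm))
            (hV1 x hxV s hsV (fun h => hsx h.symm))
    refine ⟨{z | ReflTransGen r y z ∧ ReflTransGen r z y}, ⟨⟨y, ReflTransGen.refl, ReflTransGen.refl⟩, ?_, ?_⟩, hyx, hxy⟩
    · rintro s ⟨hys, hsy⟩ t ⟨hyt, hty⟩
      exact hty.trans hys
    · rintro s ⟨hys, hsy⟩ t ht hst
      exact ht ⟨hys.trans hst, (terminal_of_reach hyT hys t hst).trans hsy⟩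
  · -- absorbing → gen stable
    rintro ⟨A, ⟨hne, hmut, hcl⟩, hxA⟩
    have hxT : MyTerminal r x := by
      intro z hz
      have hzA : z ∈ A := by
        by_contra hzA
        exact hcl x hxA z hzA hz
      exact hmut x hxA z hzA
    letI sd : Setoid S := ⟨fun a b => ReflTransGen r a b ∧ ReflTransGen r b a,
      ⟨fun a => ⟨ReflTransGen.refl, ReflTransGen.refl⟩,
       fun h => ⟨h.2, h.1⟩,
       fun h1 h2 => ⟨h1.1.trans h2.1, h2.2.trans h1.2⟩⟩⟩
    let rep : S → S := fun y =>
      if ReflTransGen r x y ∧ ReflTransGen r y x then x else (Quotient.mk sd y).out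
    have hrep_mr : ∀ y, ReflTransGen r y (rep y) ∧ ReflTransGen r (rep y) y := by
      intro y
      by_cases h : ReflTransGen r x y ∧ ReflTransGen r y x
      · simp only [rep, if_pos h]; exact ⟨h.2, h.1⟩
      · simp only [rep, if_neg h]
        have := Quotient.mk_out (s := sd) y
        exact ⟨this.2, this.1⟩
    have hrep_eq : ∀ y z, ReflTransGen r y z → ReflTransGen r z y → rep y = rep z := by
      intro y z hyz hzy
      by_cases h : ReflTransGen r x y ∧ ReflTransGen r y x
      · have h' : ReflTransGen r x z ∧ ReflTransGen r z x := ⟨h.1.trans hyz, hzy.trans h.2⟩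
        simp only [rep, if_pos h, if_pos h']
      · have h' : ¬ (ReflTransGen r x z ∧ ReflTransGen r z x) := by
          rintro ⟨h1, h2⟩
          exact h ⟨h1.trans hzy, hyz.trans h2⟩
        simp only [rep, if_neg h, if_neg h']
        congr 1
        exact Quotient.sound ⟨hyz, hzy⟩
    refine ⟨{v | ∃ y, MyTerminal r y ∧ rep y = v}, ⟨?_, ?_⟩, ⟨x, hxT, ?_⟩⟩
    · rintro s ⟨y1, hy1T, rfl⟩ t ⟨y2, hy2T, rfl⟩ hne hTG
      have h1 := hrep_mr y1
      have h2 := hrep_mr y2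
      have hsT : MyTerminal r (rep y1) := terminal_of_reach hy1T h1.1
      have hst : ReflTransGen r (rep y1) (rep y2) := hTG.to_reflTransGen
      have hts : ReflTransGen r (rep y2) (rep y1) := hsT _ hst
      exact hne (hrep_eq y1 y2 (h1.1.trans (hst.trans h2.2)) (h2.1.trans (hts.trans h1.2)))
    · intro t ht
      obtain ⟨y, hty, hyT⟩ := exists_terminal (r := r) t
      exact ⟨rep y, ⟨y, hyT, rfl⟩, hty.trans (hrep_mr y).1⟩
    · simp only [rep]
      rw [if_pos ⟨ReflTransGen.refl, ReflTransGen.refl⟩]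
end

section
/- Let N be a finite set of n ≥ 2 agents with nonnegative integers n_1 ≥ n_2 ≥ ... ≥ n_n such that for every i, the sum of n_j over j ≠ i is at least n_i, and the total m = n_1 + ... + n_n is at least 2. Then there exists a circular arrangement (a cyclic sequence of length m) consisting of exactly n_i occurrences of symbol i for each i, such that no two cyclically consecutive entries are equal. -/
open Finset in
/-- Given `n ≥ 2` symbols with multiplicities `c 0 ≥ c 1 ≥ ... ≥ c (n-1)` such that each
multiplicity is at most the sum of the others and the total `m` is at least `2`, there is
a cyclic arrangement of length `m` using each symbol `i` exactly `c i` times in which no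
two cyclically consecutive entries are equal. -/
theorem exists_cyclic_arrangement (n : ℕ) (hn : 2 ≤ n) (c : Fin n → ℕ)
    (hmono : ∀ i j : Fin n, i ≤ j → c j ≤ c i)
    (hbal : ∀ i : Fin n, c i ≤ ∑ j ∈ univ.erase i, c j)
    (m : ℕ) (hm : m = ∑ i : Fin n, c i) (hm2 : 2 ≤ m) :
    ∃ x : Fin m → Fin n,
      (∀ i : Fin n, (univ.filter fun k : Fin m => x k = i).card = c i) ∧
      (∀ k : Fin m, x k ≠ x ⟨(↑k + 1) % m, Nat.mod_lt _ (by omega)⟩) := by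
  classical
  -- extended multiplicities and prefix sums
  set c' : ℕ → ℕ := fun a => if h : a < n then c ⟨a, h⟩ else 0 with hc'
  set P : ℕ → ℕ := fun a => ∑ j ∈ Finset.range a, c' j with hPdef
  have hPsucc : ∀ a, P (a + 1) = P a + c' a := fun a => Finset.sum_range_succ _ a
  have hPmono : Monotone P := by
    intro a b hab
    exact Finset.sum_le_sum_of_subset (Finset.range_subset_range.2 hab)
  have hPn : P n = m := by
    show ∑ j ∈ Finset.range n, c' j = m
    rw [hm, ← Fin.sum_univ_eq_sum_range]
    exact Finset.sum_congr rfl fun i _ => by simp [hc', i.isLt]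
  have hP0 : P 0 = 0 := Finset.sum_range_zero _
  have hP1 : P 1 = c' 0 := Finset.sum_range_one _
  -- balance for the largest multiplicity
  have hc0 : 2 * c' 0 ≤ m := by
    have h0n : 0 < n := by omega
    have h1 := hbal ⟨0, h0n⟩
    have hsum : (∑ j ∈ univ.erase ⟨0, h0n⟩, c j) + c ⟨0, h0n⟩ = ∑ j, c j :=
      Finset.sum_erase_add _ _ (Finset.mem_univ _)
    have h2 : c' 0 = c ⟨0, h0n⟩ := by simp [hc', h0n]
    omega
  have hmono' : ∀ a, a < n → c' a ≤ c' 0 := by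
    intro a ha
    have h0n : 0 < n := by omega
    have := hmono ⟨0, h0n⟩ ⟨a, ha⟩ (by simp [Fin.le_def])
    simpa [hc', ha, h0n] using this
  have hc0P : ∀ a, 0 < a → c' 0 ≤ P a := by
    intro a ha
    calc c' 0 = P 1 := hP1.symm
    _ ≤ P a := hPmono ha
  -- the symbol at grouped position t
  set w : ℕ → ℕ := fun t => Nat.findGreatest (fun a => P a ≤ t) (n - 1) with hwdef
  have hw_lt : ∀ t, w t < n := fun t =>
    lt_of_le_of_lt (Nat.findGreatest_le _) (by omega)
  have hw_le : ∀ t, P (w t) ≤ t := by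
    intro t
    exact Nat.findGreatest_spec (P := fun a => P a ≤ t) (Nat.zero_le _) (by simp [hP0])
  have hw_ub : ∀ t, t < m → t < P (w t + 1) := by
    intro t ht
    by_cases h : w t + 1 ≤ n - 1
    · by_contra hcon
      push_neg at hcon
      exact Nat.findGreatest_is_greatest (P := fun a => P a ≤ t) (Nat.lt_succ_self _) h hcon
    · have h2 : P n ≤ P (w t + 1) := hPmono (by omega)
      omega
  have hw_eq : ∀ t a, t < m → P a ≤ t → t < P (a + 1) → w t = a := by
    intro t a ht h1 h2
    have ha : a ≤ n - 1 := by
      by_contra hcon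
      have : P n ≤ P a := hPmono (by omega)
      omega
    rcases lt_trichotomy (w t) a with h | h | h
    · exact absurd h1 (Nat.findGreatest_is_greatest (P := fun a => P a ≤ t) h ha)
    · exact h
    · have h3 : P (a + 1) ≤ P (w t) := hPmono (Nat.succ_le_of_lt h)
      have h4 := hw_le t
      omega
  -- the interleaving permutation
  set g : ℕ → ℕ := fun K => if K % 2 = 0 then K / 2 else (m + 1) / 2 + K / 2 with hgdef
  have hg_lt : ∀ K, K < m → g K < m := by
    intro K hK
    show (if K % 2 = 0 then K / 2 else (m + 1) / 2 + K / 2) < m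
    split <;> omega
  have hg_inj : ∀ K1 K2, K1 < m → K2 < m → g K1 = g K2 → K1 = K2 := by
    intro K1 K2 h1 h2 h
    have h' : (if K1 % 2 = 0 then K1 / 2 else (m + 1) / 2 + K1 / 2)
        = (if K2 % 2 = 0 then K2 / 2 else (m + 1) / 2 + K2 / 2) := h
    split_ifs at h' <;> omega
  refine ⟨fun k => ⟨w (g k.val), hw_lt _⟩, ?_, ?_⟩
  · -- counting
    intro i
    have hbij : Function.Bijective (fun k : Fin m => (⟨g k.val, hg_lt _ k.isLt⟩ : Fin m)) := by
      rw [← Finite.injective_iff_bijective]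
      intro k1 k2 h
      exact Fin.ext (hg_inj _ _ k1.isLt k2.isLt (congrArg Fin.val h))
    have step1 : (univ.filter fun k : Fin m => (⟨w (g k.val), hw_lt _⟩ : Fin n) = i).card
        = (univ.filter fun t : Fin m => w t.val = i.val).card := by
      refine Finset.card_bij (fun k _ => ⟨g k.val, hg_lt _ k.isLt⟩) ?_ ?_ ?_
      · intro k hk
        simp only [Finset.mem_filter, Finset.mem_univ, true_and] at hk ⊢
        exact congrArg Fin.val hk
      · intro k1 h1 k2 h2 h
        exact Fin.ext (hg_inj _ _ k1.isLt k2.isLt (congrArg Fin.val h))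
      · intro t ht
        simp only [Finset.mem_filter, Finset.mem_univ, true_and] at ht
        obtain ⟨k, hk⟩ := hbij.2 t
        refine ⟨k, ?_, hk⟩
        simp only [Finset.mem_filter, Finset.mem_univ, true_and]
        apply Fin.ext
        show w (g k.val) = i.val
        have : g k.val = t.val := congrArg Fin.val hk
        rw [this, ht]
    have step2 : (univ.filter fun t : Fin m => w t.val = i.val).card = c i := by
      have hch : ∀ t : Fin m, (w t.val = i.val) ↔ (P i.val ≤ t.val ∧ t.val < P (i.val + 1)) := by
        intro t
        constructor
        · intro h
          refine ⟨h ▸ hw_le t.val, h ▸ hw_ub t.val t.isLt⟩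
        · intro ⟨h1, h2⟩
          exact hw_eq t.val i.val t.isLt h1 h2
      have hsub : P (i.val + 1) ≤ m := by
        have := hPmono (show i.val + 1 ≤ n from i.isLt)
        omega
      have hcard : (univ.filter fun t : Fin m => w t.val = i.val).card
          = (Finset.Ico (P i.val) (P (i.val + 1))).card := by
        refine Finset.card_bij (fun t _ => t.val) ?_ ?_ ?_
        · intro t ht
          simp only [Finset.mem_filter, Finset.mem_univ, true_and] at ht
          exact Finset.mem_Ico.2 ((hch t).1 ht)
        · intro t1 _ t2 _ h
          exact Fin.ext h
        · intro j hj
          rw [Finset.mem_Ico] at hj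
          have hjm : j < m := lt_of_lt_of_le hj.2 hsub
          refine ⟨⟨j, hjm⟩, ?_, rfl⟩
          simp only [Finset.mem_filter, Finset.mem_univ, true_and]
          exact (hch ⟨j, hjm⟩).2 ⟨hj.1, hj.2⟩
      rw [hcard, Nat.card_Ico, hPsucc]
      have : c' i.val = c i := by simp [hc', i.isLt]
      omega
    rw [step1, step2]
  · -- adjacency
    intro k
    intro heq
    have hval : w (g k.val) = w (g ((k.val + 1) % m)) := congrArg Fin.val heq
    set a := w (g k.val) with hadef
    have hk : (k : ℕ) < m := k.isLt
    have hu1 : P a ≤ g k.val := hw_le _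
    have hu2 : g k.val < P a + c' a := by
      have := hw_ub (g k.val) (hg_lt _ hk)
      rw [hPsucc] at this; exact this
    have hv1 : P a ≤ g ((k.val + 1) % m) := hval ▸ hw_le _
    have hv2 : g ((k.val + 1) % m) < P a + c' a := by
      have h2 := hw_ub (g ((k.val + 1) % m)) (hg_lt _ (Nat.mod_lt _ (by omega)))
      rw [hPsucc, ← hval] at h2; exact h2
    have hca : c' a ≤ c' 0 := hmono' a (hw_lt _)
    have hPbranch : P a = 0 ∨ c' 0 ≤ P a := by
      rcases Nat.eq_zero_or_pos a with h | h
      · left; rw [h]; exact hP0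
      · right; exact hc0P a h
    -- unfold g
    rcases (by omega : (k : ℕ) + 1 = m ∨ (k : ℕ) + 1 < m) with hkm | hkm
    · have hmod : ((k : ℕ) + 1) % m = 0 := by rw [hkm, Nat.mod_self]
      rw [hmod] at hv1 hv2
      have hg0 : g 0 = 0 := by show (if 0 % 2 = 0 then 0 / 2 else _) = 0; simp
      rw [hg0] at hv1 hv2
      have hgk : g k.val = (if (k : ℕ) % 2 = 0 then (k : ℕ) / 2 else (m + 1) / 2 + (k : ℕ) / 2) := rfl
      rw [hgk] at hu1 hu2
      split_ifs at hu1 hu2 <;> rcases hPbranch with h | h <;> omega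
    · have hmod : ((k : ℕ) + 1) % m = (k : ℕ) + 1 := Nat.mod_eq_of_lt hkm
      rw [hmod] at hv1 hv2
      have hgk : g k.val = (if (k : ℕ) % 2 = 0 then (k : ℕ) / 2 else (m + 1) / 2 + (k : ℕ) / 2) := rfl
      have hgk' : g ((k : ℕ) + 1) = (if ((k : ℕ) + 1) % 2 = 0 then ((k : ℕ) + 1) / 2 else (m + 1) / 2 + ((k : ℕ) + 1) / 2) := rfl
      rw [hgk] at hu1 hu2
      rw [hgk'] at hv1 hv2
      split_ifs at hu1 hu2 <;> split_ifs at hv1 hv2 <;>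
        rcases hPbranch with h | h <;> omega
end

section
/- Fix a finite set of jobs J with a designated common-best job, agents N, and linear preference orderings where each agent ranks the common-best job first. For each agent i, let N_i(R) be the set of Pareto efficient assignments (bijections from N to J) that assign the common-best job to agent i, and n_i(R) = |N_i(R)|. Then for every agent i: the sum over j ≠ i of n_j(R) is at least n_i(R). -/
/-!
Fix an agent `i` and let `b` be `i`'s favourite job other than the common best job `a`.
Relabelling the jobs by the transposition `(a b)` is injective on assignments, and it sends a
Pareto efficient assignment `μ` with `μ i = a` to one giving `a` to the agent `k ≠ i` who held
`b`; this bounds `n_i(R)` by `∑_{k ≠ i} n_k(R)`. The image is again Pareto efficient: an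
assignment dominating it must leave `a` with `k` (nobody can improve on `a`) and then `b` with
`i` (nothing else `i` can get is better), so it differs from the image only on agents untouched
by `(a b)`, and relabelling it back would dominate `μ`.
-/

/-- An assignment `μ` (a bijection from agents to jobs) is Pareto efficient at the strict
preference profile `P`: no other assignment gives every agent a weakly better job and
some agent a strictly better job. -/
def ParetoEff {N J : Type*} (P : N → J → J → Prop) (μ : N ≃ J) : Prop :=
  ¬ ∃ ν : N ≃ J, (∀ i : N, ν i = μ i ∨ P i (ν i) (μ i)) ∧ ∃ i : N, P i (ν i) (μ i)

lemma eq_of_eq_or_rel_of_best {J : Type*} {r : J → J → Prop} [Std.Asymm r] {s : Set J} {b x : J}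
    (hb : ∀ c ∈ s, c ≠ b → r b c) (hx : x ∈ s) (h : x = b ∨ r x b) : x = b :=
  h.elim id fun hxb => by_contra fun hne => asymm_of r hxb (hb x hx hne)

lemma exists_best_ne {J : Type*} [Finite J] (r : J → J → Prop) [IsStrictTotalOrder J r] {a : J}
    (h : ∃ b, b ≠ a) : ∃ b, b ≠ a ∧ ∀ c, c ≠ a → c ≠ b → r b c := by
  obtain ⟨b, hb, hmin⟩ := (Finite.wellFounded_of_trans_of_irrefl r).has_min {c | c ≠ a} h
  refine ⟨b, hb, fun c hc hcb => ?_⟩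
  rcases trichotomous_of r b c with hbc | rfl | hcb'
  · exact hbc
  · exact absurd rfl hcb
  · exact absurd hcb' (hmin c hc)

section

variable {N J : Type*} (P : N → J → J → Prop)

def ParetoDominates (ν μ : N ≃ J) : Prop :=
  (∀ m : N, ν m = μ m ∨ P m (ν m) (μ m)) ∧ ∃ m : N, P m (ν m) (μ m)

variable {P}

lemma paretoEff_iff {μ : N ≃ J} :
    ParetoEff P μ ↔ ∀ ν, ¬ ParetoDominates P ν μ :=
  not_exists

lemma ParetoDominates.trans_perm (hP : ∀ m, Std.Irrefl (P m)) {ρ ν : N ≃ J}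
    (h : ParetoDominates P ρ ν) (σ : Equiv.Perm J)
    (hagree : ∀ m, σ (ν m) ≠ ν m → ρ m = ν m) :
    ParetoDominates P (ρ.trans σ) (ν.trans σ) := by
  have hfix : ∀ m, ρ m ≠ ν m → σ (ρ m) = ρ m ∧ σ (ν m) = ν m := by
    intro m hm
    refine ⟨?_, not_imp_comm.mp (hagree m) hm⟩
    -- `ρ` and `ν` are bijections agreeing on `ν⁻¹(supp σ)`, so `ρ⁻¹(supp σ) = ν⁻¹(supp σ)`.
    by_contra hmove
    have hm' : ν (ν.symm (ρ m)) = ρ m := ν.apply_symm_apply _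
    have hρ : ρ (ν.symm (ρ m)) = ρ m := (hagree _ (by rwa [hm'])).trans hm'
    exact hm (ρ.injective hρ ▸ hm').symm
  obtain ⟨hweak, m, hm⟩ := h
  refine ⟨fun m' => ?_, m, ?_⟩
  · rcases eq_or_ne (ρ m') (ν m') with heq | hne
    · exact .inl (by simp [heq])
    · obtain ⟨hρ, hν⟩ := hfix m' hne
      exact .inr (by simpa [hρ, hν] using (hweak m').resolve_left hne)
  · have hne : ρ m ≠ ν m := fun heq => irrefl_of (P m) (ν m) (heq ▸ hm)
    obtain ⟨hρ, hν⟩ := hfix m hne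
    simpa [hρ, hν] using hm

lemma ParetoEff.trans_swap [DecidableEq J]
    (hP : ∀ m, Std.Asymm (P m)) {a b : J} (hba : b ≠ a) (htop : ∀ m, ∀ c, c ≠ a → P m a c)
    {μ : N ≃ J} (hμ : ParetoEff P μ) {i : N} (hi : μ i = a) (hb : ∀ c, c ≠ a → c ≠ b → P i b c) :
    ParetoEff P (μ.trans (Equiv.swap a b)) := by
  rw [paretoEff_iff] at hμ ⊢
  intro ρ hρ
  set σ := Equiv.swap a b
  set ν := μ.trans σ
  set k := μ.symm b
  have hνk : ν k = a := by simp [ν, k, σ]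
  have hνi : ν i = b := by simp [ν, σ, hi]
  have hρk : ρ k = a :=
    eq_of_eq_or_rel_of_best (s := Set.univ) (fun c _ => htop k c) trivial (hνk ▸ hρ.1 k)
  have hρi : ρ i = b := by
    refine eq_of_eq_or_rel_of_best (s := {c | c ≠ a}) hb (fun hρi => hba ?_) (hνi ▸ hρ.1 i)
    rw [← hνi, ← hνk, ρ.injective (hρi.trans hρk.symm)]
  have hagree : ∀ m, σ (ν m) ≠ ν m → ρ m = ν m := by
    intro m hm
    by_contra hne
    refine hm (Equiv.swap_apply_of_ne_of_ne (fun h => hne ?_) (fun h => hne ?_))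
    · rw [ν.injective (h.trans hνk.symm), hνk, hρk]
    · rw [ν.injective (h.trans hνi.symm), hνi, hρi]
  have hνσ : ν.trans σ = μ := by ext; simp [ν, σ]
  exact hμ _ (hνσ ▸ hρ.trans_perm (fun m => inferInstance) σ hagree)

end

/-- In a job rotation problem where all agents share the common best job `jstar`, for
each agent `i` the number of Pareto efficient assignments giving `jstar` to `i` is at
most the total number of Pareto efficient assignments giving `jstar` to other agents. -/
theorem commonBest_count_bound {N J : Type*} [Fintype N] [DecidableEq N] [Fintype J]
    [DecidableEq J] (hn : 2 ≤ Fintype.card N) (hcard : Fintype.card N = Fintype.card J)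
    (P : N → J → J → Prop) (hP : ∀ i : N, IsStrictTotalOrder J (P i))
    (jstar : J) (htop : ∀ i : N, ∀ j : J, j ≠ jstar → P i jstar j) :
    ∀ i : N,
      {μ : N ≃ J | ParetoEff P μ ∧ μ i = jstar}.ncard ≤
        ∑ j ∈ Finset.univ.erase i,
          {μ : N ≃ J | ParetoEff P μ ∧ μ j = jstar}.ncard := by
  intro i
  have : Nontrivial J := Fintype.one_lt_card_iff_nontrivial.mp (by omega)
  obtain ⟨b, hba, hb⟩ := exists_best_ne (P i) (exists_ne jstar)
  have hswap_injective : Function.Injective fun μ : N ≃ J => μ.trans (Equiv.swap jstar b) :=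
    fun μ ν h => by simpa [Equiv.trans_assoc] using congrArg (·.trans (Equiv.swap jstar b)) h
  calc {μ : N ≃ J | ParetoEff P μ ∧ μ i = jstar}.ncard
      ≤ (⋃ j ∈ Finset.univ.erase i, {μ : N ≃ J | ParetoEff P μ ∧ μ j = jstar}).ncard := by
        refine Set.ncard_le_ncard_of_injOn _ ?_ hswap_injective.injOn
        rintro μ ⟨hμ, hμi⟩
        have hki : μ.symm b ≠ i := fun h => hba (by rw [← hμi, ← h, μ.apply_symm_apply])
        exact Set.mem_biUnion (Finset.mem_erase.mpr ⟨hki, Finset.mem_univ _⟩)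
          ⟨hμ.trans_swap (fun m => inferInstance) hba htop hμi hb, by simp⟩
    _ ≤ _ := Finset.set_ncard_biUnion_le _ _
end

section
/- In the Shapley–Scarf-style housing economy with an endowment system satisfying agency, monotonicity, exhaustivity and non-contestability, the direct exclusion core correspondence is Maskin monotonic: if μ is in the direct exclusion core at preference profile R, and R' is such that L_i(μ, R) ⊆ L_i(μ, R') for every agent i (where L_i denotes the lower contour set of μ for agent i), then μ is in the direct exclusion core at R'. -/
/-- `μ` is an allocation: each house is assigned to at most one agent (the outside
option `none` has unlimited capacity). -/
def IsAlloc {N H : Type*} (μ : N → Option H) : Prop :=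
  ∀ i j : N, ∀ h : H, μ i = some h → μ j = some h → i = j

/-- Coalition `K` directly exclusion blocks `μ` with the allocation `σ` at the strict
preference profile `P` and endowment system `ω`. -/
def ExclBlocks {N H : Type*} (P : N → Option H → Option H → Prop)
    (ω : Finset N → Finset H) (K : Finset N) (μ σ : N → Option H) : Prop :=
  K.Nonempty ∧ IsAlloc σ ∧ (∀ i ∈ K, P i (σ i) (μ i)) ∧
    ∀ j ∉ K, P j (μ j) (σ j) → ∃ h ∈ ω K, μ j = some h

/-- `μ` belongs to the direct exclusion core at `(P, ω)`. -/
def InExclCore {N H : Type*} (P : N → Option H → Option H → Prop)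
    (ω : Finset N → Finset H) (μ : N → Option H) : Prop :=
  IsAlloc μ ∧ ∀ (K : Finset N) (σ : N → Option H), ¬ ExclBlocks P ω K μ σ

/-!
A coalition blocking `μ` at `P'` already blocks it at `P` with the same allocation. A member
who strictly prefers `σ i` to `μ i` at `P'` did so at `P`, for otherwise `σ i` would lie in the
lower contour set of `μ i` at `P`, hence at `P'`. An outsider whom `σ` hurts at `P` is hurt at
`P'` by the same inclusion, so the exclusion requirement at `P'` covers it.
-/

section LowerContour

variable {α : Type*} {r r' : α → α → Prop} {a b : α}

theorem rel_of_lowerContour_subset [Std.Irrefl r]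
    (hmono : b = a ∨ r a b → b = a ∨ r' a b) (h : r a b) : r' a b :=
  (hmono (Or.inr h)).resolve_left fun hba => irrefl a (hba ▸ h)

theorem rel_of_rel_of_lowerContour_subset [Std.Trichotomous r] [Std.Asymm r']
    (hmono : b = a ∨ r a b → b = a ∨ r' a b) (h : r' b a) : r b a := by
  rcases trichotomous_of r b a with hba | rfl | hab
  · exact hba
  · exact absurd h (irrefl b)
  · rcases hmono (Or.inr hab) with rfl | hab'
    · exact absurd h (irrefl b)
    · exact absurd hab' (asymm h)

end LowerContour

theorem ExclBlocks.of_lowerContour_subset {N H : Type*} {P P' : N → Option H → Option H → Prop}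
    [∀ i, Std.Trichotomous (P i)] [∀ i, Std.Irrefl (P i)]
    [∀ i, Std.Asymm (P' i)] {ω : Finset N → Finset H} {K : Finset N}
    {μ σ : N → Option H}
    (hmono : ∀ i, (σ i = μ i ∨ P i (μ i) (σ i)) → (σ i = μ i ∨ P' i (μ i) (σ i)))
    (hb : ExclBlocks P' ω K μ σ) : ExclBlocks P ω K μ σ := by
  obtain ⟨hK, hσ, himproved, hexcluded⟩ := hb
  exact ⟨hK, hσ, fun i hi => rel_of_rel_of_lowerContour_subset (hmono i) (himproved i hi),
    fun j hj hhurt => hexcluded j hj (rel_of_lowerContour_subset (hmono j) hhurt)⟩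

theorem exclCore_maskin_monotonic_general {N H : Type*}
    (P P' : N → Option H → Option H → Prop)
    (hP : ∀ i : N, IsStrictTotalOrder (Option H) (P i))
    (hP' : ∀ i : N, IsStrictTotalOrder (Option H) (P' i))
    (ω : Finset N → Finset H)
    (μ : N → Option H) (hcore : InExclCore P ω μ)
    (hmono : ∀ i : N, ∀ σ : N → Option H, IsAlloc σ →
      (σ i = μ i ∨ P i (μ i) (σ i)) → (σ i = μ i ∨ P' i (μ i) (σ i))) :
    InExclCore P' ω μ := by
  obtain ⟨hμ, hunblocked⟩ := hcore
  exact ⟨hμ, fun K σ hb => hunblocked K σ (hb.of_lowerContour_subset fun i => hmono i σ hb.2.1)⟩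

/-- The direct exclusion core is Maskin monotonic: if `μ` is in the direct exclusion
core at `P` and every agent's lower contour set of `μ` weakly expands from `P` to `P'`,
then `μ` is in the direct exclusion core at `P'`. -/
theorem exclCore_maskin_monotonic {N H : Type*} [Fintype N] [DecidableEq N] [Fintype H]
    [DecidableEq H]
    (P P' : N → Option H → Option H → Prop)
    (hP : ∀ i : N, IsStrictTotalOrder (Option H) (P i))
    (hP' : ∀ i : N, IsStrictTotalOrder (Option H) (P' i))
    (ω : Finset N → Finset H)
    (hA1 : ω ∅ = ∅)
    (hA2 : ∀ K K' : Finset N, K ⊆ K' → ω K ⊆ ω K')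
    (hA3 : ω Finset.univ = Finset.univ)
    (hA4 : ∀ h : H, ∃ Kh : Finset N, ∀ K : Finset N, h ∈ ω K ↔ Kh ⊆ K)
    (μ : N → Option H) (hcore : InExclCore P ω μ)
    (hmono : ∀ i : N, ∀ σ : N → Option H, IsAlloc σ →
      (σ i = μ i ∨ P i (μ i) (σ i)) → (σ i = μ i ∨ P' i (μ i) (σ i))) :
    InExclCore P' ω μ :=
  exclCore_maskin_monotonic_general P P' hP hP' ω μ hcore hmono
end

section
/- If a social choice rule F is implementable in MSS by a finite rights structure, i.e., there is a finite rights structure Γ = (S, h, γ) with F(R) = h(MSS(Γ,R)) for all admissible profiles R, where MSS(Γ,R) is the unique minimal nonempty closed set satisfying deterrence of external deviations and iterated external stability at (Γ,R), then F is also implementable in absorbing sets by a finite rights structure (the same Γ works). -/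
/-- The one-step improvement relation at profile `R` induced by a rights structure
`(S, h, γ)`: some coalition entitled to move from `s` to `t` has all its members
strictly preferring `h t` to `h s`. -/
def Step {S Z N 𝓡 : Type*} (h : S → Z) (γ : S → S → Set (Set N))
    (pref : 𝓡 → N → Z → Z → Prop) (R : 𝓡) (s t : S) : Prop :=
  ∃ K ∈ γ s t, K.Nonempty ∧ ∀ i ∈ K, pref R i (h t) (h s)

/-- If a finite rights structure implements `F` in MSS (at every profile the unique
minimal nonempty set satisfying deterrence of external deviations and iterated external
stability maps onto `F R`), then the same rights structure implements `F` in absorbing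
sets: `F R` equals the image of the union of all absorbing sets. -/
theorem mss_implementation_implies_absorbing {S Z N 𝓡 : Type*} [Fintype S]
    (h : S → Z) (γ : S → S → Set (Set N)) (pref : 𝓡 → N → Z → Z → Prop)
    (F : 𝓡 → Set Z) (MSS : 𝓡 → Set S)
    (hMSSne : ∀ R : 𝓡, (MSS R).Nonempty)
    (hMSSdet : ∀ R : 𝓡, Deterrence (Step h γ pref R) (MSS R))
    (hMSSies : ∀ R : 𝓡, IterExtStable (Step h γ pref R) (MSS R))
    (hMSSmin : ∀ (R : 𝓡) (M' : Set S), M' ⊆ MSS R → M'.Nonempty →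
      Deterrence (Step h γ pref R) M' → IterExtStable (Step h γ pref R) M' → M' = MSS R)
    (hMSSuniq : ∀ (R : 𝓡) (M' : Set S), M'.Nonempty →
      Deterrence (Step h γ pref R) M' → IterExtStable (Step h γ pref R) M' →
      (∀ M'' : Set S, M'' ⊆ M' → M''.Nonempty → Deterrence (Step h γ pref R) M'' →
        IterExtStable (Step h γ pref R) M'' → M'' = M') → M' = MSS R)
    (himpl : ∀ R : 𝓡, F R = h '' MSS R) :
    ∀ R : 𝓡, F R = h '' {x : S | ∃ A : Set S, IsAbsorbing (Step h γ pref R) A ∧ x ∈ A} := by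
  intro R
  set r := Step h γ pref R with hr
  suffices hset : {x : S | ∃ A : Set S, IsAbsorbing r A ∧ x ∈ A} = MSS R by
    rw [hset]; exact himpl R
  -- staying inside a deterred set along paths
  have stay : ∀ (M : Set S), Deterrence r M → ∀ {s t : S}, s ∈ M →
      Relation.ReflTransGen r s t → t ∈ M := by
    intro M hdet s t hs hst
    induction hst with
    | refl => exact hs
    | tail _ hbc ih =>
      by_contra hc
      exact hdet _ ih _ hc hbc
  -- from any point, an absorbing set is reachable
  have reachAbs : ∀ x : S, ∃ y : S, Relation.ReflTransGen r x y ∧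
      IsAbsorbing r {z | Relation.ReflTransGen r y z} := by
    intro x
    have hfin : {y | Relation.ReflTransGen r x y}.Finite := Set.toFinite _
    have hne : {y | Relation.ReflTransGen r x y}.Nonempty := ⟨x, .refl⟩
    obtain ⟨y, hy, hmin⟩ := Set.exists_min_image _
      (fun y => {z | Relation.ReflTransGen r y z}.ncard) hfin hne
    have key : ∀ z, Relation.ReflTransGen r y z →
        {w | Relation.ReflTransGen r z w} = {w | Relation.ReflTransGen r y w} := by
      intro z hyz
      have hsub : {w | Relation.ReflTransGen r z w} ⊆ {w | Relation.ReflTransGen r y w} :=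
        fun w hw => hyz.trans hw
      have hz : z ∈ {y' | Relation.ReflTransGen r x y'} := hy.trans hyz
      exact Set.eq_of_subset_of_ncard_le hsub (hmin z hz) (Set.toFinite _)
    refine ⟨y, hy, ⟨y, .refl⟩, ?_, ?_⟩
    · intro s hs t ht
      have := key t ht
      rw [← this] at hs
      exact hs
    · intro s hs t ht hst
      have : t ∈ {w | Relation.ReflTransGen r s w} := hst
      rw [key s hs] at this
      exact ht this
  -- every absorbing set is contained in MSS R
  have absSub : ∀ A : Set S, IsAbsorbing r A → A ⊆ MSS R := by
    intro A ⟨⟨a, ha⟩, hmut, hnoex⟩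
    have hex : ∃ s ∈ A, s ∈ MSS R := by
      by_cases hq : a ∈ MSS R
      · exact ⟨a, ha, hq⟩
      · obtain ⟨s, hsM, hpath⟩ := hMSSies R a hq
        refine ⟨s, ?_, hsM⟩
        by_contra hc
        exact hnoex a ha s hc hpath
    obtain ⟨s, hsA, hsM⟩ := hex
    intro t htA
    exact stay _ (hMSSdet R) hsM (hmut t htA s hsA)
  apply Set.Subset.antisymm
  · rintro x ⟨A, hA, hxA⟩
    exact absSub A hA hxA
  · -- MSS R ⊆ union of absorbing sets, via minimality
    set M' := {x : S | (∃ A : Set S, IsAbsorbing r A ∧ x ∈ A)} with hM'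
    have hsub : M' ⊆ MSS R := fun x ⟨A, hA, hxA⟩ => absSub A hA hxA
    have hne : M'.Nonempty := by
      obtain ⟨x, _⟩ := hMSSne R
      obtain ⟨y, _, hAbs⟩ := reachAbs x
      exact ⟨y, ⟨_, hAbs, .refl⟩⟩
    have hdet : Deterrence r M' := by
      rintro s ⟨A, hA, hsA⟩ t htM hst
      apply htM
      refine ⟨A, hA, ?_⟩
      by_contra hc
      exact hA.2.2 s hsA t hc (Relation.ReflTransGen.single hst)
    have hies : IterExtStable r M' := by
      intro t _
      obtain ⟨y, hty, hAbs⟩ := reachAbs t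
      exact ⟨y, ⟨_, hAbs, .refl⟩, hty⟩
    rw [← hMSSmin R M' hsub hne hdet hies]
end

section
/- Let N = {1,2,3}, Z = {x,y,z}. At profile R: agent 1 ranks x ≻ y ≻ z, agent 2 ranks z ≻ x ≻ y, agent 3 ranks y ≻ z ≻ x. At profile R': agents 1 and 2 both rank x ≻ y ≻ z, agent 3 ranks y ≻ x ≻ z. Define F(R) = {x,y,z} and F(R') = {x,y}. Then F is not implementable in rotation programs; equivalently, F violates rotation monotonicity: for every cyclic ordering of F(R) = {x,y,z}, the rotation monotonicity condition fails when passing from R to R'. -/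
/-- Utilities at profile `R` over outcomes `0 = x`, `1 = y`, `2 = z`:
agent 1: x ≻ y ≻ z, agent 2: z ≻ x ≻ y, agent 3: y ≻ z ≻ x. -/
def rankR : Fin 3 → Fin 3 → ℕ := ![![3, 2, 1], ![2, 1, 3], ![1, 3, 2]]

/-- Utilities at profile `R'`: agents 1 and 2: x ≻ y ≻ z, agent 3: y ≻ x ≻ z. -/
def rankR' : Fin 3 → Fin 3 → ℕ := ![![3, 2, 1], ![3, 2, 1], ![2, 3, 1]]

def ofun (v0 v1 v2 : Fin 3) (t : ZMod 3) : Fin 3 :=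
  if t = 0 then v0 else if t = 1 then v1 else v2

def Bad (v0 v1 v2 : Fin 3) (i : ZMod 3) : Prop :=
  ∃ h' : Fin 3, ∃ a : Fin 3 → Fin 3, ∃ w : Fin 3,
    (∀ ℓ : Fin 3, (ℓ : ℕ) < (h' : ℕ) + 1 →
      rankR' (a ℓ) (ofun v0 v1 v2 (i + ((ℓ : ℕ) : ZMod 3))) <
        rankR' (a ℓ) (ofun v0 v1 v2 (i + ((ℓ : ℕ) : ZMod 3) + 1))) ∧
    rankR (a h') w ≤ rankR (a h') (ofun v0 v1 v2 (i + (((h' : ℕ) + 1 : ℕ) : ZMod 3))) ∧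
    rankR' (a h') (ofun v0 v1 v2 (i + (((h' : ℕ) + 1 : ℕ) : ZMod 3))) < rankR' (a h') w

instance (v0 v1 v2 : Fin 3) (i : ZMod 3) : Decidable (Bad v0 v1 v2 i) := by
  unfold Bad; infer_instance

lemma not_bad : ∀ v0 v1 v2 : Fin 3, v0 ≠ v1 → v0 ≠ v2 → v1 ≠ v2 →
    ∃ i, ¬ Bad v0 v1 v2 i := by decide

/-- For `F(R) = {x, y, z}` and `F(R') = {x, y}` as above, every cyclic ordering of
`F(R)` fails the rotation monotonicity requirement when passing from `R` to `R'`: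
there is some `F(R)`-outcome from which no myopic improvement path at `R'` along
consecutive elements of the ordering ends with a preference reversal. -/
theorem rotation_monotonicity_fails :
    ∀ ord : ZMod 3 → Fin 3, Function.Bijective ord →
      ¬ (∀ i : ZMod 3, ∃ h : ℕ, 1 ≤ h ∧ h ≤ 3 ∧
        ∃ a : ℕ → Fin 3, ∃ w : Fin 3,
          (∀ ℓ : ℕ, ℓ < h →
            rankR' (a ℓ) (ord (i + (ℓ : ZMod 3))) <
              rankR' (a ℓ) (ord (i + (ℓ : ZMod 3) + 1))) ∧
          rankR (a (h - 1)) w ≤ rankR (a (h - 1)) (ord (i + (h : ZMod 3))) ∧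
          rankR' (a (h - 1)) (ord (i + (h : ZMod 3))) < rankR' (a (h - 1)) w) := by
  intro ord hbij H
  have hinj := hbij.1
  obtain ⟨v0, hv0⟩ : ∃ v, ord 0 = v := ⟨_, rfl⟩
  obtain ⟨v1, hv1⟩ : ∃ v, ord 1 = v := ⟨_, rfl⟩
  obtain ⟨v2, hv2⟩ : ∃ v, ord 2 = v := ⟨_, rfl⟩
  have hord : ∀ t : ZMod 3, ord t = ofun v0 v1 v2 t := by
    intro t
    have ht : t = 0 ∨ t = 1 ∨ t = 2 := by revert t; decide
    rcases ht with rfl | rfl | rfl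
    · rw [ofun, if_pos rfl]; exact hv0
    · rw [ofun, if_neg (by decide), if_pos rfl]; exact hv1
    · rw [ofun, if_neg (by decide), if_neg (by decide)]; exact hv2
  have d01 : v0 ≠ v1 := fun e => absurd (hinj (hv0.trans (e.trans hv1.symm))) (by decide)
  have d02 : v0 ≠ v2 := fun e => absurd (hinj (hv0.trans (e.trans hv2.symm))) (by decide)
  have d12 : v1 ≠ v2 := fun e => absurd (hinj (hv1.trans (e.trans hv2.symm))) (by decide)
  obtain ⟨i, hi⟩ := not_bad _ _ _ d01 d02 d12
  apply hi
  obtain ⟨h, h1, h3, a, w, hpath, hr1, hr2⟩ := H i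
  refine ⟨⟨h - 1, by omega⟩, fun ℓ => a ℓ.val, w, ?_, ?_, ?_⟩
  · intro ℓ hℓ
    have hℓ' : (ℓ : ℕ) < (h - 1) + 1 := hℓ
    have := hpath ℓ.val (by omega)
    simpa only [hord] using this
  · have e : ((⟨h - 1, by omega⟩ : Fin 3) : ℕ) + 1 = h := by
      show (h - 1) + 1 = h; omega
    rw [e]
    simpa only [hord] using hr1
  · have e : ((⟨h - 1, by omega⟩ : Fin 3) : ℕ) + 1 = h := by
      show (h - 1) + 1 = h; omega
    rw [e]
    simpa only [hord] using hr2
end
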